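/- Let (α, N, B, κ_g, τ_g) be a Frenet apparatus of a timelike unit speed non-geodesic curve in S³₁ and let p ∈ S³₁ (so ⟨p,p⟩ = 1) satisfy ⟨p, N(s)⟩ = 0 for all s ∈ ℝ. Then there exist constants n₁, n₂, n ∈ ℝ with n₁² − n₂² + n² = 1 such that for all s ∈ ℝ: ⟨p, α'(s)⟩ = n₁·sinh(s) + n₂·cosh(s), and ⟨p, N(s)⟩² + ⟨p, B(s)⟩² = n² (the squared norm of the component p⊥ of p orthogonal to the tangent direction of α). -/

import Mathlib

/-!
Put `f = ⟨p, α'⟩` and `g = ⟨p, α⟩`. Since `α'' = α + κ_g N` and `⟨p, N⟩ = 0`, the pair solves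
`f' = g`, `g' = f`, so `f = g(0) sinh + f(0) cosh` and `f² - g²` is constant. Expanding `p` in the
pseudo-orthonormal frame `(α', α, N, B)` gives `⟨p,α⟩² - ⟨p,α'⟩² + ⟨p,N⟩² + ⟨p,B⟩² = ⟨p,p⟩ = 1`,
which at `s = 0` is the relation between the constants and at general `s` makes `⟨p,B⟩²` constant.
-/

open Real

/-- The Minkowski scalar product on `ℝ⁴₁`:
`⟨x,y⟩ = -x₁y₁ + x₂y₂ + x₃y₃ + x₄y₄`. -/
noncomputable def mdot (x y : Fin 4 → ℝ) : ℝ :=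
  -(x 0 * y 0) + x 1 * y 1 + x 2 * y 2 + x 3 * y 3

open Matrix

theorem Matrix.transpose_mul_mul_eq_of_mul_mul_transpose_eq {n R : Type*} [Fintype n]
    [DecidableEq n] [CommRing R] {E G : Matrix n n R} (hG : G * G = 1)
    (hE : E * G * Eᵀ = G) : Eᵀ * G * E = G := by
  have h : (E * G) * (Eᵀ * G) = 1 := by rw [← Matrix.mul_assoc, hE, hG]
  have h' : (Eᵀ * G) * (E * G) = 1 := mul_eq_one_comm.mp h
  calc Eᵀ * G * E = (Eᵀ * G) * (E * G) * G := by simp only [Matrix.mul_assoc, hG, Matrix.mul_one]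
    _ = G := by rw [h', Matrix.one_mul]

theorem Matrix.mulVec_dotProduct_mulVec_mulVec {n R : Type*} [Fintype n] [CommSemiring R]
    (A B : Matrix n n R) (v : n → R) :
    (A *ᵥ v) ⬝ᵥ (B *ᵥ (A *ᵥ v)) = v ⬝ᵥ ((Aᵀ * B * A) *ᵥ v) := by
  rw [← mulVec_mulVec, ← mulVec_mulVec, mulVec_transpose, dotProduct_comm v,
    ← dotProduct_mulVec, dotProduct_comm]

noncomputable def minkowskiGram : Matrix (Fin 4) (Fin 4) ℝ := diagonal ![-1, 1, 1, 1]

lemma minkowskiGram_mul_self : minkowskiGram * minkowskiGram = 1 := by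
  rw [minkowskiGram, diagonal_mul_diagonal, ← diagonal_one]
  congr 1
  ext i
  fin_cases i <;> norm_num

lemma minkowskiGram_mulVec_apply (v : Fin 4 → ℝ) (i : Fin 4) :
    (minkowskiGram *ᵥ v) i = minkowskiGram i i * v i := by
  simp [minkowskiGram, mulVec_diagonal]

lemma mdot_eq_dotProduct (x y : Fin 4 → ℝ) : mdot x y = x ⬝ᵥ (minkowskiGram *ᵥ y) := by
  simp [mdot, minkowskiGram, dotProduct, Fin.sum_univ_four, mulVec_diagonal]

lemma mdot_comm (x y : Fin 4 → ℝ) : mdot x y = mdot y x := by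
  simp only [mdot]; ring

lemma mul_minkowskiGram_mul_transpose_apply (E : Matrix (Fin 4) (Fin 4) ℝ) (i j : Fin 4) :
    (E * minkowskiGram * Eᵀ) i j = mdot (E i) (E j) := by
  simp [mdot, minkowskiGram, mul_apply, Fin.sum_univ_four, diagonal]

lemma mdot_self_eq_sum_of_frame (E : Matrix (Fin 4) (Fin 4) ℝ)
    (hE : E * minkowskiGram * Eᵀ = minkowskiGram) (p : Fin 4 → ℝ) :
    mdot p p = ∑ i, minkowskiGram i i * mdot p (E i) ^ 2 := by
  have hcoord : ∀ i, (E *ᵥ (minkowskiGram *ᵥ p)) i = mdot p (E i) := fun i => by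
    rw [mdot_comm, mdot_eq_dotProduct]; rfl
  have hsum : ∑ i, minkowskiGram i i * mdot p (E i) ^ 2 =
      (E *ᵥ (minkowskiGram *ᵥ p)) ⬝ᵥ (minkowskiGram *ᵥ (E *ᵥ (minkowskiGram *ᵥ p))) := by
    simp only [dotProduct, minkowskiGram_mulVec_apply, hcoord]
    exact Finset.sum_congr rfl fun i _ => by ring
  rw [hsum, mulVec_dotProduct_mulVec_mulVec,
    transpose_mul_mul_eq_of_mul_mul_transpose_eq minkowskiGram_mul_self hE, mulVec_mulVec,
    minkowskiGram_mul_self, one_mulVec, dotProduct_comm, mdot_eq_dotProduct]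

lemma mdot_self_eq_of_frame {a t n b : Fin 4 → ℝ} (haa : mdot a a = 1) (htt : mdot t t = -1)
    (hnn : mdot n n = 1) (hbb : mdot b b = 1) (hat : mdot a t = 0) (han : mdot a n = 0)
    (hab : mdot a b = 0) (htn : mdot t n = 0) (htb : mdot t b = 0) (hnb : mdot n b = 0)
    (p : Fin 4 → ℝ) :
    mdot p p = mdot p a ^ 2 - mdot p t ^ 2 + mdot p n ^ 2 + mdot p b ^ 2 := by
  -- the timelike vector goes first, so that the Gram matrix of the frame is `minkowskiGram`
  have hE : of ![t, a, n, b] * minkowskiGram * (of ![t, a, n, b])ᵀ = minkowskiGram := by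
    ext i j
    rw [mul_minkowskiGram_mul_transpose_apply]
    change mdot (![t, a, n, b] i) (![t, a, n, b] j) = _
    fin_cases i <;> fin_cases j <;> simp [mdot_comm, minkowskiGram, *]
  rw [mdot_self_eq_sum_of_frame _ hE, Fin.sum_univ_four]
  change minkowskiGram 0 0 * mdot p t ^ 2 + minkowskiGram 1 1 * mdot p a ^ 2 +
    minkowskiGram 2 2 * mdot p n ^ 2 + minkowskiGram 3 3 * mdot p b ^ 2 = _
  simp only [minkowskiGram, diagonal_apply_eq, cons_val_zero, cons_val_one, cons_val]
  ring

lemma mdot_add_right (p x y : Fin 4 → ℝ) : mdot p (x + y) = mdot p x + mdot p y := by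
  simp only [mdot, Pi.add_apply]; ring

lemma mdot_smul_right (p : Fin 4 → ℝ) (c : ℝ) (x : Fin 4 → ℝ) :
    mdot p (c • x) = c * mdot p x := by
  simp only [mdot, Pi.smul_apply, smul_eq_mul]; ring

lemma HasDerivAt.const_mdot (p : Fin 4 → ℝ) {f : ℝ → Fin 4 → ℝ} {v : Fin 4 → ℝ} {s : ℝ}
    (h : HasDerivAt f v s) : HasDerivAt (fun t => mdot p (f t)) (mdot p v) s := by
  have hi := hasDerivAt_pi.mp h
  exact ((((hi 0).const_mul (p 0)).neg.add ((hi 1).const_mul (p 1))).add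
    ((hi 2).const_mul (p 2))).add ((hi 3).const_mul (p 3))

lemma apply_eq_apply_zero_of_hasDerivAt_zero {f : ℝ → ℝ} (hf : ∀ s, HasDerivAt f 0 s) (s : ℝ) :
    f s = f 0 :=
  is_const_of_deriv_eq_zero (fun x => (hf x).differentiableAt) (fun x => (hf x).deriv) s 0

lemma eq_mul_sinh_add_mul_cosh_of_hasDerivAt {f g : ℝ → ℝ} (hf : ∀ s, HasDerivAt f (g s) s)
    (hg : ∀ s, HasDerivAt g (f s) s) (s : ℝ) : f s = g 0 * sinh s + f 0 * cosh s := by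
  have hu : ∀ x, HasDerivAt (fun x => f x * cosh x - g x * sinh x) 0 x := fun x =>
    ((hf x).mul (hasDerivAt_cosh x)).sub ((hg x).mul (hasDerivAt_sinh x)) |>.congr_deriv
      (by ring)
  have hv : ∀ x, HasDerivAt (fun x => g x * cosh x - f x * sinh x) 0 x := fun x =>
    ((hg x).mul (hasDerivAt_cosh x)).sub ((hf x).mul (hasDerivAt_sinh x)) |>.congr_deriv
      (by ring)
  have hu0 := apply_eq_apply_zero_of_hasDerivAt_zero hu s
  have hv0 := apply_eq_apply_zero_of_hasDerivAt_zero hv s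
  simp only [cosh_zero, sinh_zero, mul_one, mul_zero, sub_zero] at hu0 hv0
  linear_combination cosh s * hu0 + sinh s * hv0 + -f s * cosh_sq_sub_sinh_sq s

lemma sq_sub_sq_eq_of_hasDerivAt {f g : ℝ → ℝ} (hf : ∀ s, HasDerivAt f (g s) s)
    (hg : ∀ s, HasDerivAt g (f s) s) (s : ℝ) : f s ^ 2 - g s ^ 2 = f 0 ^ 2 - g 0 ^ 2 := by
  have h : ∀ x, HasDerivAt (fun x => f x ^ 2 - g x ^ 2) 0 x := fun x =>
    ((hf x).pow 2).sub ((hg x).pow 2) |>.congr_deriv (by ring)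
  exact apply_eq_apply_zero_of_hasDerivAt_zero h s

theorem tangent_component_of_timelike_rectifying_curve_general
    (α N B : ℝ → Fin 4 → ℝ) (κg : ℝ → ℝ)
    (hαsm : ContDiff ℝ (⊤ : ℕ∞) α)
    (hα1 : ∀ s, mdot (α s) (α s) = 1)
    (hT1 : ∀ s, mdot (deriv α s) (deriv α s) = -1)
    (hN1 : ∀ s, mdot (N s) (N s) = 1)
    (hB1 : ∀ s, mdot (B s) (B s) = 1)
    (hαT : ∀ s, mdot (α s) (deriv α s) = 0)
    (hαN : ∀ s, mdot (α s) (N s) = 0)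
    (hαB : ∀ s, mdot (α s) (B s) = 0)
    (hTN : ∀ s, mdot (deriv α s) (N s) = 0)
    (hTB : ∀ s, mdot (deriv α s) (B s) = 0)
    (hNB : ∀ s, mdot (N s) (B s) = 0)
    (hF1 : ∀ s, deriv (deriv α) s = α s + κg s • N s)
    (p : Fin 4 → ℝ) (hp : mdot p p = 1)
    (hrect : ∀ s, mdot p (N s) = 0) :
    ∃ n₁ n₂ n : ℝ, n₁ ^ 2 - n₂ ^ 2 + n ^ 2 = 1 ∧
      ∀ s, mdot p (deriv α s) = n₁ * Real.sinh s + n₂ * Real.cosh s ∧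
        (mdot p (N s)) ^ 2 + (mdot p (B s)) ^ 2 = n ^ 2 := by
  have hα : Differentiable ℝ α := hαsm.differentiable (by simp)
  have hT : Differentiable ℝ (deriv α) :=
    (contDiff_infty_iff_deriv.mp hαsm).2.differentiable (by simp)
  set F := fun s => mdot p (deriv α s)
  set G := fun s => mdot p (α s)
  have hG : ∀ s, HasDerivAt G (F s) s := fun s => (hα s).hasDerivAt.const_mdot p
  have hF : ∀ s, HasDerivAt F (G s) s := fun s => by
    simpa [hF1 s, mdot_add_right, mdot_smul_right, hrect s] using (hT s).hasDerivAt.const_mdot p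
  have hframe : ∀ s, G s ^ 2 - F s ^ 2 + mdot p (B s) ^ 2 = 1 := fun s => by
    have h := mdot_self_eq_of_frame (hα1 s) (hT1 s) (hN1 s) (hB1 s) (hαT s) (hαN s) (hαB s)
      (hTN s) (hTB s) (hNB s) p
    rw [hp, hrect s] at h
    linarith
  refine ⟨G 0, F 0, mdot p (B 0), by linarith [hframe 0],
    fun s => ⟨eq_mul_sinh_add_mul_cosh_of_hasDerivAt hF hG s, ?_⟩⟩
  rw [hrect s]
  linarith [hframe s, hframe 0, sq_sub_sq_eq_of_hasDerivAt hF hG s]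

/-- For a timelike rectifying curve in `S³₁` with respect to `p ∈ S³₁`, one has
`⟨p, T(s)⟩ = n₁ sinh s + n₂ cosh s` and `|p⊥|² = n²` with `n₁² - n₂² + n² = 1`. -/
theorem tangent_component_of_timelike_rectifying_curve
    (α N B : ℝ → Fin 4 → ℝ) (κg τg : ℝ → ℝ)
    (hαsm : ContDiff ℝ (⊤ : ℕ∞) α) (hNsm : ContDiff ℝ (⊤ : ℕ∞) N)
    (hBsm : ContDiff ℝ (⊤ : ℕ∞) B)
    (hκsm : ContDiff ℝ (⊤ : ℕ∞) κg) (hτsm : ContDiff ℝ (⊤ : ℕ∞) τg)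
    (hκpos : ∀ s, 0 < κg s)
    (hα1 : ∀ s, mdot (α s) (α s) = 1)
    (hT1 : ∀ s, mdot (deriv α s) (deriv α s) = -1)
    (hN1 : ∀ s, mdot (N s) (N s) = 1)
    (hB1 : ∀ s, mdot (B s) (B s) = 1)
    (hαT : ∀ s, mdot (α s) (deriv α s) = 0)
    (hαN : ∀ s, mdot (α s) (N s) = 0)
    (hαB : ∀ s, mdot (α s) (B s) = 0)
    (hTN : ∀ s, mdot (deriv α s) (N s) = 0)
    (hTB : ∀ s, mdot (deriv α s) (B s) = 0)
    (hNB : ∀ s, mdot (N s) (B s) = 0)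
    (hF1 : ∀ s, deriv (deriv α) s = α s + κg s • N s)
    (hF2 : ∀ s, deriv N s = κg s • deriv α s + τg s • B s)
    (hF3 : ∀ s, deriv B s = -τg s • N s)
    (p : Fin 4 → ℝ) (hp : mdot p p = 1)
    (hrect : ∀ s, mdot p (N s) = 0) :
    ∃ n₁ n₂ n : ℝ, n₁ ^ 2 - n₂ ^ 2 + n ^ 2 = 1 ∧
      ∀ s, mdot p (deriv α s) = n₁ * Real.sinh s + n₂ * Real.cosh s ∧
        (mdot p (N s)) ^ 2 + (mdot p (B s)) ^ 2 = n ^ 2 :=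
  tangent_component_of_timelike_rectifying_curve_general α N B κg hαsm hα1 hT1 hN1 hB1 hαT hαN hαB
    hTN hTB hNB hF1 p hp hrect
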